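/- Let p be a prime, n ≥ 1, let x_0 < x_1 < ... < x_{p^n−1} be the p^n fixed points of the n-fold iterate g_p^n, and let α be a generator of the multiplicative group of the finite field F_{p^n}. Define B_α on the fixed points by B_α(x_0) = 0 and B_α(x_k) = α^{π_{p^n}(k)} for 1 ≤ k ≤ p^n − 1. Then B_α is a bijection from {x ∈ [0,1] : g_p^n(x) = x} onto F_{p^n}, and (B_α(x_k))^p = B_α(g_p(x_k)) for every 0 ≤ k ≤ p^n − 1. -/

import Mathlib

/-- The continuous piecewise linear map `g_p : [0,1] → [0,1]` that goes up and down
`p` times: on `[k/p, (k+1)/p]` it is `x ↦ p·x − k` for `k` even and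
`x ↦ k + 1 − p·x` for `k` odd. -/
noncomputable def gp (p : ℕ) (x : ℝ) : ℝ :=
  if Even ⌊(p : ℝ) * x⌋ then (p : ℝ) * x - ⌊(p : ℝ) * x⌋
  else (⌊(p : ℝ) * x⌋ : ℝ) + 1 - (p : ℝ) * x

/-- The permutation `π_{p^n}` of `{0, …, p^n − 1}`: `π_{p^1}` is the identity, and for
`a·p^{n−1} ≤ k < (a+1)·p^{n−1}`, `π_{p^n}(k) = a·p^{n−1} + π_{p^{n−1}}(k − a·p^{n−1})`
if `a` is even, and `π_{p^n}(k) = a·p^{n−1} + π_{p^{n−1}}(p^{n−1} − (k − a·p^{n−1}) − 1)`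
if `a` is odd. -/
def piPow (p : ℕ) : ℕ → ℕ → ℕ
  | 0, k => k
  | n + 1, k =>
    if Even (k / p ^ n) then k / p ^ n * p ^ n + piPow p n (k % p ^ n)
    else k / p ^ n * p ^ n + piPow p n (p ^ n - k % p ^ n - 1)

/-!
With `T = gp 1` (the triangle wave), `gp p y = T (p * y)`. As `T t = ±(t - 2j)` for an integer `j`
and `T` is even and `2`-periodic, `T (p * T t) = T (p * t)`; hence `(gp p)^[n] = gp N` with
`N = p ^ n`. On the lap `[k/N, (k+1)/N]` the map `gp N` is affine with slope `±N`, so it has exactly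
one fixed point `x_k` there. For `k = a * p^(n-1) + r`, `x_k` lies in the `a`-th lap of `gp p`, so
`gp p x_k` lies in the lap `j` at level `n - 1` obtained from `r` by a reflection when `a` is odd;
since `gp (p^(n-1))` maps it back to `x_k`, it is the fixed point `x_{k'}` with `k' = p * j + c`
for an explicit digit `c`. Unwinding the recursion of `π` gives `π k' ≡ p * π k (mod N - 1)`, so
`B` turns `gp p` into the Frobenius `β ↦ β ^ p`; bijectivity holds because `π` permutes
`{1, …, N - 1}` and `α` has order `N - 1`.
-/

theorem gp_eq_gp_one_mul (p : ℕ) (y : ℝ) : gp p y = gp 1 (p * y) := by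
  simp [gp]

theorem gp_one_eq_of_mem {k : ℤ} {t : ℝ} (h₁ : k ≤ t) (h₂ : t ≤ k + 1) :
    gp 1 t = if Even k then t - k else k + 1 - t := by
  rcases h₂.lt_or_eq with h₂ | rfl
  · have hk : ⌊t⌋ = k := Int.floor_eq_iff.2 ⟨h₁, h₂⟩
    simp [gp, hk]
  · have hk : ⌊(k : ℝ) + 1⌋ = k + 1 := mod_cast Int.floor_intCast (k + 1)
    by_cases he : Even k <;> simp [gp, hk, he]

theorem gp_one_eq_floor (t : ℝ) : gp 1 t = if Even ⌊t⌋ then t - ⌊t⌋ else ⌊t⌋ + 1 - t :=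
  gp_one_eq_of_mem (Int.floor_le t) (Int.lt_floor_add_one t).le

theorem gp_eq_of_mem {p k : ℕ} {y : ℝ} (h₁ : k ≤ p * y) (h₂ : p * y ≤ k + 1) :
    gp p y = if Even k then p * y - k else k + 1 - p * y := by
  rw [gp_eq_gp_one_mul, gp_one_eq_of_mem (k := k) (by exact_mod_cast h₁) (by exact_mod_cast h₂)]
  simp

theorem gp_one_add_two_mul (t : ℝ) (j : ℤ) : gp 1 (t + 2 * j) = gp 1 t := by
  rw [gp_one_eq_of_mem (k := ⌊t⌋ + 2 * j) (by push_cast; linarith [Int.floor_le t])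
    (by push_cast; linarith [Int.lt_floor_add_one t]), gp_one_eq_floor]
  simp only [Int.even_add, even_two_mul, iff_true]
  split_ifs <;> push_cast <;> ring

theorem gp_one_neg (t : ℝ) : gp 1 (-t) = gp 1 t := by
  rw [gp_one_eq_of_mem (k := -⌊t⌋ - 1) (by push_cast; linarith [Int.lt_floor_add_one t])
    (by push_cast; linarith [Int.floor_le t]), gp_one_eq_floor]
  simp only [Int.even_sub, even_neg, Int.not_even_one, iff_false]
  split_ifs <;> push_cast <;> ring

theorem gp_one_mul_gp_one (p : ℕ) (t : ℝ) : gp 1 (p * gp 1 t) = gp 1 (p * t) := by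
  rw [gp_one_eq_floor t]
  split_ifs with h
  · obtain ⟨j, hj⟩ := h
    rw [← gp_one_add_two_mul (p * t) (-(p * j)), hj]
    congr 1; push_cast; ring
  · obtain ⟨j, hj⟩ := Int.not_even_iff_odd.1 h
    rw [← gp_one_neg, ← gp_one_add_two_mul _ (p * (j + 1)), hj]
    congr 1; push_cast; ring

theorem gp_gp (p q : ℕ) (y : ℝ) : gp p (gp q y) = gp (p * q) y := by
  rw [gp_eq_gp_one_mul p, gp_eq_gp_one_mul q, gp_one_mul_gp_one, gp_eq_gp_one_mul (p * q),
    Nat.cast_mul, mul_assoc]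

theorem iterate_gp (p : ℕ) {n : ℕ} (hn : n ≠ 0) : (gp p)^[n] = gp (p ^ n) := by
  induction n with
  | zero => exact absurd rfl hn
  | succ n ih =>
    rcases eq_or_ne n 0 with rfl | hn'
    · simp
    · funext y; rw [Function.iterate_succ_apply', ih hn', gp_gp, pow_succ']

noncomputable def gpFixedPt (N k : ℕ) : ℝ :=
  if Even k then k / (N - 1) else (k + 1) / (N + 1)

section FixedPoints

variable {N k : ℕ}

theorem eq_gpFixedPt_of_mem (hN : 2 ≤ N) {y : ℝ} (h₁ : k ≤ N * y) (h₂ : N * y ≤ k + 1)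
    (hy : gp N y = y) : y = gpFixedPt N k := by
  have hN' : (2 : ℝ) ≤ N := by exact_mod_cast hN
  rw [gp_eq_of_mem h₁ h₂] at hy
  unfold gpFixedPt
  split_ifs at hy ⊢
  · rw [eq_div_iff (by linarith)]; linarith
  · rw [eq_div_iff (by linarith)]; linarith

theorem gpFixedPt_mem_lap (hN : 2 ≤ N) (hk : k < N) :
    k ≤ N * gpFixedPt N k ∧ N * gpFixedPt N k ≤ k + 1 := by
  have hN' : (2 : ℝ) ≤ N := by exact_mod_cast hN
  have hk' : (k : ℝ) + 1 ≤ N := by exact_mod_cast hk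
  unfold gpFixedPt
  split_ifs
  · rw [mul_div_assoc', le_div_iff₀ (by linarith), div_le_iff₀ (by linarith)]
    constructor <;> nlinarith
  · rw [mul_div_assoc', le_div_iff₀ (by linarith), div_le_iff₀ (by linarith)]
    constructor <;> nlinarith

theorem gpFixedPt_lt_succ (hk : k + 1 < N) : N * gpFixedPt N k < k + 1 := by
  have hk' : (k : ℝ) + 2 ≤ N := by exact_mod_cast hk
  unfold gpFixedPt
  split_ifs
  · rw [mul_div_assoc', div_lt_iff₀ (by linarith)]; nlinarith
  · rw [mul_div_assoc', div_lt_iff₀ (by linarith)]; nlinarith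

theorem gp_gpFixedPt (hN : 2 ≤ N) (hk : k < N) : gp N (gpFixedPt N k) = gpFixedPt N k := by
  obtain ⟨h₁, h₂⟩ := gpFixedPt_mem_lap hN hk
  have hN' : (2 : ℝ) ≤ N := by exact_mod_cast hN
  have hne : (N : ℝ) - 1 ≠ 0 := by linarith
  rw [gp_eq_of_mem h₁ h₂]
  unfold gpFixedPt
  split_ifs
  · field_simp; ring
  · field_simp; ring

theorem gpFixedPt_strictMonoOn (hN : 2 ≤ N) : StrictMonoOn (gpFixedPt N) (Set.Iio N) := by
  intro i _ j hj hij
  have hN' : (0 : ℝ) < N := by positivity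
  have h₁ := gpFixedPt_lt_succ (N := N) (k := i) (by simp at hj; omega)
  have h₂ := (gpFixedPt_mem_lap hN hj).1
  have hij' : (i : ℝ) + 1 ≤ j := by exact_mod_cast hij
  exact lt_of_mul_lt_mul_left (by linarith) hN'.le

theorem setOf_gp_fixed_eq_image (hN : 2 ≤ N) :
    {y ∈ Set.Icc (0 : ℝ) 1 | gp N y = y} = gpFixedPt N '' Set.Iio N := by
  ext y
  constructor
  · rintro ⟨⟨hy₀, hy₁⟩, hy⟩
    have hNy : (0 : ℝ) ≤ N * y := by positivity
    refine ⟨min ⌊N * y⌋₊ (N - 1), by simp; omega, (eq_gpFixedPt_of_mem hN ?_ ?_ hy).symm⟩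
    · exact (Nat.cast_le.2 (min_le_left _ _)).trans (Nat.floor_le hNy)
    · rcases min_choice ⌊N * y⌋₊ (N - 1) with h | h <;> rw [h]
      · exact (Nat.lt_floor_add_one _).le
      · rw [Nat.cast_sub (by omega)]; push_cast; nlinarith
  · rintro ⟨k, hk, rfl⟩
    obtain ⟨h₁, h₂⟩ := gpFixedPt_mem_lap hN hk
    have hk' : (k : ℝ) + 1 ≤ N := by exact_mod_cast hk
    have hN' : (0 : ℝ) < N := by positivity
    refine ⟨⟨?_, ?_⟩, gp_gpFixedPt hN hk⟩
    · exact nonneg_of_mul_nonneg_right (by linarith) hN'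
    · nlinarith

end FixedPoints

/-- A decreasing branch of the fold reverses the order of the laps. -/
def foldIndex (M a r : ℕ) : ℕ := if Even a then r else M - r - 1

section FoldIndex

variable {M a r : ℕ}

theorem foldIndex_lt (hr : r < M) : foldIndex M a r < M := by
  unfold foldIndex; split_ifs <;> omega

theorem foldIndex_foldIndex (hr : r < M) : foldIndex M a (foldIndex M a r) = r := by
  unfold foldIndex; split_ifs <;> omega

theorem foldIndex_mul_add {p b : ℕ} (hr : r < M) (hb : b < p) :
    foldIndex (p * M) a (p * r + b) = p * foldIndex M a r + foldIndex p a b := by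
  unfold foldIndex
  split_ifs
  · rfl
  · obtain ⟨c, rfl⟩ : ∃ c, M = r + 1 + c := ⟨M - r - 1, by omega⟩
    obtain ⟨d, rfl⟩ : ∃ d, p = b + 1 + d := ⟨p - b - 1, by omega⟩
    rw [show r + 1 + c - r - 1 = c by omega, show b + 1 + d - b - 1 = d by omega, Nat.sub_sub]
    apply Nat.sub_eq_of_eq_add
    ring

theorem even_mul_add_iff (hr : r < M) : Even (a * M + r) ↔ (Even a ↔ Even (foldIndex M a r)) := by
  unfold foldIndex
  split_ifs with ha
  · simp [Nat.even_add, ha]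
  · rw [Nat.sub_sub, Nat.even_sub (by omega), Nat.even_add, Nat.even_mul, Nat.even_add_one]
    tauto

end FoldIndex

section PiPow

variable {p : ℕ}

theorem exists_eq_mul_pow_add {n k : ℕ} (hk : k < p ^ (n + 1)) :
    ∃ a < p, ∃ r < p ^ n, k = a * p ^ n + r := by
  have hpos : 0 < p ^ n := Nat.pos_of_ne_zero (by rintro h; simp [pow_succ, h] at hk)
  refine ⟨k / p ^ n, ?_, k % p ^ n, Nat.mod_lt _ hpos, (Nat.div_add_mod' k _).symm⟩
  rwa [Nat.div_lt_iff_lt_mul hpos, ← pow_succ']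

theorem Nat.mul_add_div_eq_of_lt {M u : ℕ} (a : ℕ) (hu : u < M) : (a * M + u) / M = a := by
  rw [mul_comm, Nat.mul_add_div (by omega), Nat.div_eq_of_lt hu, add_zero]

theorem piPow_succ_mul_add (n a : ℕ) {r : ℕ} (hr : r < p ^ n) :
    piPow p (n + 1) (a * p ^ n + r) = a * p ^ n + piPow p n (foldIndex (p ^ n) a r) := by
  have hmod : (a * p ^ n + r) % p ^ n = r := by
    rw [mul_comm, Nat.mul_add_mod, Nat.mod_eq_of_lt hr]
  rw [piPow, Nat.mul_add_div_eq_of_lt a hr, hmod, foldIndex]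
  split_ifs <;> rfl

theorem piPow_zero_right (n : ℕ) : piPow p n 0 = 0 := by
  induction n with
  | zero => rfl
  | succ n ih => simp [piPow, ih]

theorem piPow_lt {n k : ℕ} (hk : k < p ^ n) : piPow p n k < p ^ n := by
  induction n generalizing k with
  | zero => simpa [piPow] using hk
  | succ n ih =>
    obtain ⟨a, ha, r, hr, rfl⟩ := exists_eq_mul_pow_add hk
    rw [piPow_succ_mul_add n a hr]
    have := ih (foldIndex_lt (a := a) hr)
    calc a * p ^ n + _ < (a + 1) * p ^ n := by rw [add_mul, one_mul]; omega
      _ ≤ p ^ (n + 1) := by rw [pow_succ']; exact Nat.mul_le_mul_right _ ha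

theorem piPow_injOn (n : ℕ) : Set.InjOn (piPow p n) (Set.Iio (p ^ n)) := by
  induction n with
  | zero => intro k _ l _ h; simpa [piPow] using h
  | succ n ih =>
    intro k hk l hl h
    obtain ⟨a, -, r, hr, rfl⟩ := exists_eq_mul_pow_add hk
    obtain ⟨b, -, s, hs, rfl⟩ := exists_eq_mul_pow_add hl
    rw [piPow_succ_mul_add n a hr, piPow_succ_mul_add n b hs] at h
    have hr' := foldIndex_lt (a := a) hr
    have hs' := foldIndex_lt (a := b) hs
    obtain rfl : a = b := by
      simpa only [Nat.mul_add_div_eq_of_lt _ (piPow_lt hr'),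
        Nat.mul_add_div_eq_of_lt _ (piPow_lt hs')] using congrArg (· / p ^ n) h
    have := congrArg (foldIndex (p ^ n) a) (ih hr' hs' (by omega))
    rw [foldIndex_foldIndex hr, foldIndex_foldIndex hs] at this
    rw [this]

theorem piPow_mul_add {n s b : ℕ} (hs : s < p ^ n) (hb : b < p) :
    piPow p (n + 1) (p * s + b) = p * piPow p n s + foldIndex p s b := by
  induction n generalizing s b with
  | zero =>
    obtain rfl : s = 0 := by simpa using hs
    simp [piPow, foldIndex, Nat.mod_one]
  | succ n ih =>
    obtain ⟨a, -, r, hr, rfl⟩ := exists_eq_mul_pow_add hs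
    have hlt : p * r + b < p ^ (n + 1) := by rw [pow_succ']; nlinarith
    rw [show p * (a * p ^ n + r) + b = a * p ^ (n + 1) + (p * r + b) by ring,
      piPow_succ_mul_add _ a hlt, piPow_succ_mul_add n a hr, pow_succ' p n,
      foldIndex_mul_add hr hb, ih (foldIndex_lt hr) (foldIndex_lt hb)]
    have hfold : foldIndex p (foldIndex (p ^ n) a r) (foldIndex p a b) =
        foldIndex p (a * p ^ n + r) b := by
      have := even_mul_add_iff (a := a) hr
      unfold foldIndex at this ⊢
      split_ifs at this ⊢ <;> first | rfl | omega | tauto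
    rw [hfold]
    ring

theorem piPow_mul_foldIndex_add_modEq {m a r j : ℕ} (ha : a < p) (hr : r < p ^ m)
    (hj : foldIndex (p ^ m) a r = j) :
    piPow p (m + 1) (p * j + foldIndex p j a) ≡ p * piPow p (m + 1) (a * p ^ m + r)
      [MOD p ^ (m + 1) - 1] := by
  rw [piPow_mul_add (hj ▸ foldIndex_lt hr) (foldIndex_lt ha), foldIndex_foldIndex ha,
    piPow_succ_mul_add m a hr, hj]
  have hN : 1 ≡ p ^ (m + 1) [MOD p ^ (m + 1) - 1] :=
    (Nat.modEq_sub (Nat.one_le_iff_ne_zero.2 (pow_ne_zero _ (by omega)))).symm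
  calc p * piPow p m j + a
      = p * piPow p m j + a * 1 := by rw [mul_one]
    _ ≡ p * piPow p m j + a * p ^ (m + 1) [MOD p ^ (m + 1) - 1] := (hN.mul_left a).add_left _
    _ = p * (a * p ^ m + piPow p m j) := by ring

end PiPow

section Action

variable {p : ℕ}

theorem mem_lap_of_mem_lap_mul {M a r : ℕ} (hr : r < M) {t : ℝ}
    (h₁ : (a * M + r : ℝ) ≤ M * t) (h₂ : M * t ≤ a * M + r + 1) : a ≤ t ∧ t ≤ a + 1 := by
  have hM : (0 : ℝ) < M := by exact_mod_cast (show 0 < M by omega)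
  have hr' : (r : ℝ) + 1 ≤ M := by exact_mod_cast hr
  constructor <;> nlinarith

theorem mem_lap_gp {M a r : ℕ} (hr : r < M) {y : ℝ}
    (h₁ : (a * M + r : ℝ) ≤ M * (p * y)) (h₂ : M * (p * y) ≤ a * M + r + 1) :
    (foldIndex M a r : ℝ) ≤ M * gp p y ∧ M * gp p y ≤ foldIndex M a r + 1 := by
  obtain ⟨ha₁, ha₂⟩ := mem_lap_of_mem_lap_mul hr h₁ h₂
  rw [gp_eq_of_mem ha₁ ha₂, foldIndex]
  split_ifs
  · constructor <;> linarith
  · rw [Nat.cast_sub (by omega), Nat.cast_sub (by omega)]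
    push_cast
    constructor <;> linarith

theorem mem_lap_mul_of_gp_eq {M j a : ℕ} (ha : a < p) {z : ℝ}
    (h₁ : j ≤ M * z) (h₂ : M * z ≤ j + 1) (hy₁ : a ≤ p * gp M z) (hy₂ : p * gp M z ≤ a + 1) :
    ((p * j + foldIndex p j a : ℕ) : ℝ) ≤ (p * M : ℕ) * z ∧
      (p * M : ℕ) * z ≤ (p * j + foldIndex p j a : ℕ) + 1 := by
  rw [gp_eq_of_mem h₁ h₂] at hy₁ hy₂
  rw [foldIndex]
  push_cast
  split_ifs at hy₁ hy₂ ⊢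
  · constructor <;> nlinarith
  · rw [Nat.cast_sub (by omega), Nat.cast_sub (by omega)]
    push_cast
    constructor <;> nlinarith

theorem gp_gpFixedPt_mul_pow_add (hp : 2 ≤ p) {m a r j : ℕ} (ha : a < p) (hr : r < p ^ m)
    (hj : foldIndex (p ^ m) a r = j) :
    gp p (gpFixedPt (p ^ (m + 1)) (a * p ^ m + r)) =
      gpFixedPt (p ^ (m + 1)) (p * j + foldIndex p j a) := by
  have hN : 2 ≤ p ^ (m + 1) := hp.trans (Nat.le_self_pow (by omega) p)
  have hk : a * p ^ m + r < p ^ (m + 1) := by rw [pow_succ]; nlinarith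
  set y := gpFixedPt (p ^ (m + 1)) (a * p ^ m + r)
  have hNy : ((p ^ (m + 1) : ℕ) : ℝ) * y = (p ^ m : ℕ) * (p * y) := by push_cast; ring
  have hk' : ((a * p ^ m + r : ℕ) : ℝ) = a * (p ^ m : ℕ) + r := by push_cast; ring
  obtain ⟨hy₁, hy₂⟩ := gpFixedPt_mem_lap hN hk
  rw [hNy, hk'] at hy₁ hy₂
  obtain ⟨hpy₁, hpy₂⟩ := mem_lap_of_mem_lap_mul hr hy₁ hy₂
  obtain ⟨hz₁, hz₂⟩ := mem_lap_gp hr hy₁ hy₂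
  rw [hj] at hz₁ hz₂
  have hz : gp (p ^ m) (gp p y) = y := by rw [gp_gp, ← pow_succ, gp_gpFixedPt hN hk]
  obtain ⟨hk'₁, hk'₂⟩ := mem_lap_mul_of_gp_eq ha hz₁ hz₂ (by rwa [hz]) (by rwa [hz])
  rw [← pow_succ'] at hk'₁ hk'₂
  refine eq_gpFixedPt_of_mem hN hk'₁ hk'₂ ?_
  rw [gp_gp, mul_comm, ← gp_gp, gp_gpFixedPt hN hk]

theorem mul_foldIndex_add_eq_zero_iff {m a r j : ℕ} (hp : p ≠ 0)
    (hj : foldIndex (p ^ m) a r = j) : p * j + foldIndex p j a = 0 ↔ a * p ^ m + r = 0 := by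
  constructor
  · intro h
    obtain ⟨h₁, h₂⟩ := Nat.add_eq_zero_iff.1 h
    obtain rfl : j = 0 := by simpa [hp] using h₁
    obtain rfl : a = 0 := by simpa [foldIndex] using h₂
    simpa [foldIndex] using hj
  · intro h
    obtain ⟨rfl, rfl⟩ : a = 0 ∧ r = 0 := by simpa [hp] using h
    subst hj
    simp [foldIndex]

theorem exists_gp_gpFixedPt_eq (hp : 2 ≤ p) {m k : ℕ} (hk : k < p ^ (m + 1)) :
    ∃ k' < p ^ (m + 1), (k' = 0 ↔ k = 0) ∧
      gp p (gpFixedPt (p ^ (m + 1)) k) = gpFixedPt (p ^ (m + 1)) k' ∧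
      piPow p (m + 1) k' ≡ p * piPow p (m + 1) k [MOD p ^ (m + 1) - 1] := by
  obtain ⟨a, ha, r, hr, rfl⟩ := exists_eq_mul_pow_add hk
  have hjlt : foldIndex (p ^ m) a r < p ^ m := foldIndex_lt hr
  have hclt := foldIndex_lt (M := p) (a := foldIndex (p ^ m) a r) ha
  refine ⟨p * foldIndex (p ^ m) a r + foldIndex p (foldIndex (p ^ m) a r) a, ?_,
    mul_foldIndex_add_eq_zero_iff (by omega) rfl, gp_gpFixedPt_mul_pow_add hp ha hr rfl,
    piPow_mul_foldIndex_add_modEq ha hr rfl⟩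
  rw [pow_succ']
  nlinarith

end Action

theorem StrictMonoOn.eqOn_of_image_eq {α β : Type*} [LinearOrder α] [WellFoundedLT α]
    [Preorder β] {s : Set α} {f g : α → β} (hf : StrictMonoOn f s) (hg : StrictMonoOn g s)
    (h : f '' s = g '' s) : s.EqOn f g := fun a ha ↦
  congrFun ((hf.domRestrict.range_inj hg.domRestrict).1 (by simpa [Set.range_domRestrict])) ⟨a, ha⟩

section Generator

variable {K : Type*} [Field K] {α : Kˣ} {q : ℕ}

theorem val_pow_eq_val_pow_iff (hq : Nat.card K = q) (hα : ∀ β : Kˣ, β ∈ Subgroup.zpowers α)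
    {i j : ℕ} : (α : K) ^ i = (α : K) ^ j ↔ i ≡ j [MOD q - 1] := by
  rw [← Units.val_pow_eq_pow_val, ← Units.val_pow_eq_pow_val, Units.val_inj,
    pow_eq_pow_iff_modEq, orderOf_eq_card_of_forall_mem_zpowers hα, Nat.card_units, hq]

theorem bijOn_of_eq_pow_generator [Finite K] (hq : Nat.card K = q)
    (hα : ∀ β : Kˣ, β ∈ Subgroup.zpowers α) {σ : ℕ → ℕ} (hσ : Set.InjOn σ (Set.Iio q))
    (hσq : ∀ k < q, σ k < q) (hσ0 : σ 0 = 0)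
    {f : ℕ → K} (hf0 : f 0 = 0) (hf : ∀ k, 1 ≤ k → k < q → f k = (α : K) ^ σ k) :
    Set.BijOn f (Set.Iio q) Set.univ := by
  have hσpos : ∀ k, 1 ≤ k → k < q → 1 ≤ σ k := fun k hk₁ hk ↦ by
    by_contra h
    have := hσ hk (show 0 < q by omega) (by rw [hσ0]; omega)
    omega
  have hinj : Set.InjOn f (Set.Iio q) := by
    intro k hk l hl hkl
    simp only [Set.mem_Iio] at hk hl
    rcases Nat.eq_zero_or_pos k with rfl | hk₁ <;> rcases Nat.eq_zero_or_pos l with rfl | hl₁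
    · rfl
    · rw [hf0, hf l hl₁ hl] at hkl
      exact absurd hkl.symm (pow_ne_zero _ α.ne_zero)
    · rw [hf0, hf k hk₁ hk] at hkl
      exact absurd hkl (pow_ne_zero _ α.ne_zero)
    · rw [hf k hk₁ hk, hf l hl₁ hl, val_pow_eq_val_pow_iff hq hα] at hkl
      have := hσpos k hk₁ hk; have := hσpos l hl₁ hl; have := hσq k hk; have := hσq l hl
      exact hσ hk hl (hkl.eq_of_abs_lt (by rw [abs_lt]; omega))
  refine ⟨Set.mapsTo_univ _ _, hinj, fun c _ ↦ ?_⟩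
  have himage : f '' Set.Iio q = Set.univ := by
    refine Set.eq_of_subset_of_ncard_le (Set.subset_univ _) ?_ (Set.toFinite _)
    rw [hinj.ncard_image, Set.ncard_univ, hq, Set.ncard_eq_toFinset_card', Set.toFinset_Iio,
      Nat.card_Iio]
  exact himage.symm ▸ Set.mem_univ c

theorem pow_eq_of_eq_pow_generator (hq : Nat.card K = q) (hα : ∀ β : Kˣ, β ∈ Subgroup.zpowers α)
    {σ : ℕ → ℕ} {f : ℕ → K} (hf0 : f 0 = 0) (hf : ∀ k, 1 ≤ k → k < q → f k = (α : K) ^ σ k)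
    {p k k' : ℕ} (hp : p ≠ 0) (hk : k < q) (hk' : k' < q) (hk0 : k' = 0 ↔ k = 0)
    (hσ : σ k' ≡ p * σ k [MOD q - 1]) : f k ^ p = f k' := by
  rcases Nat.eq_zero_or_pos k with rfl | hk₁
  · rw [hk0.2 rfl, hf0, zero_pow hp]
  · have hk'₁ : 1 ≤ k' := Nat.pos_of_ne_zero fun h ↦ by have := hk0.1 h; omega
    rw [hf k hk₁ hk, hf k' hk'₁ hk', ← pow_mul, val_pow_eq_val_pow_iff hq hα, mul_comm]
    exact hσ.symm

end Generator

/-- Theorem: with `x_0 < x_1 < ⋯ < x_{p^n−1}` the fixed points of `g_p^n` and `α` a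
generator of the multiplicative group of `F_{p^n}`, the map `B_α` with `B_α(x_0) = 0`
and `B_α(x_k) = α^{π_{p^n}(k)}` for `k ≥ 1` is a bijection onto `F_{p^n}` and satisfies
`(B_α(x_k))^p = B_α(g_p(x_k))` for every fixed point `x_k`. -/
theorem bijection_B_alpha (p n : ℕ) [Fact p.Prime] (hn : 1 ≤ n)
    (x : ℕ → ℝ) (hmono : StrictMonoOn x (Set.Iio (p ^ n)))
    (himg : x '' Set.Iio (p ^ n) = {y ∈ Set.Icc (0 : ℝ) 1 | (gp p)^[n] y = y})
    (α : (GaloisField p n)ˣ) (hα : ∀ β : (GaloisField p n)ˣ, β ∈ Subgroup.zpowers α)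
    (B : ℝ → GaloisField p n) (hB0 : B (x 0) = 0)
    (hBk : ∀ k, 1 ≤ k → k < p ^ n → B (x k) = (α : GaloisField p n) ^ piPow p n k) :
    Set.BijOn B {y ∈ Set.Icc (0 : ℝ) 1 | (gp p)^[n] y = y} Set.univ ∧
    ∀ k < p ^ n, B (x k) ^ p = B (gp p (x k)) := by
  have hp : 2 ≤ p := (Fact.out : p.Prime).two_le
  have hN : 2 ≤ p ^ n := hp.trans (Nat.le_self_pow (by omega) p)
  have hq : Nat.card (GaloisField p n) = p ^ n := GaloisField.card p n (by omega)
  rw [iterate_gp p (by omega), setOf_gp_fixed_eq_image hN] at himg ⊢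
  have hx : Set.EqOn x (gpFixedPt (p ^ n)) (Set.Iio (p ^ n)) :=
    hmono.eqOn_of_image_eq (gpFixedPt_strictMonoOn hN) himg
  rw [← himg, ← Set.bijOn_comp_iff hmono.injOn]
  refine ⟨bijOn_of_eq_pow_generator hq hα (piPow_injOn n) (fun k ↦ piPow_lt)
    (piPow_zero_right n) hB0 hBk, fun k hk ↦ ?_⟩
  obtain ⟨m, rfl⟩ : ∃ m, n = m + 1 := ⟨n - 1, by omega⟩
  obtain ⟨k', hk', hk0, hg, hmod⟩ := exists_gp_gpFixedPt_eq hp hk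
  rw [show gp p (x k) = x k' by rw [hx hk, hg, hx hk']]
  exact pow_eq_of_eq_pow_generator (f := B ∘ x) hq hα hB0 hBk (by omega) hk hk' hk0 hmod
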